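/- arXiv:2412.03507 — 4 statements merged into one kernel-verified Lean document; each statement's English description precedes it below -/
import Mathlib

section
/- Let R be a commutative ring with unity and A a commutative unital R-algebra that is a free R-module with basis {1, α, α², ..., α^{n-1}} for some α ∈ A, and let σ, τ : A → A be unital R-algebra homomorphisms. A (σ,τ)-derivation D : A → A is inner if and only if there exists β ∈ A such that D(α) = β(τ(α) - σ(α)). -/
/-- For an algebra with power basis {1, α, ..., α^{n-1}}, a
(σ,τ)-derivation is inner iff D(α) = β(τ(α) - σ(α)) for some β. -/
theorem sigma_tau_derivation_inner_iff_power_basis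
    {R A : Type*} [CommRing R] [CommRing A] [Algebra R A]
    (σ τ : A →ₐ[R] A) {n : ℕ} (α : A) (b : Module.Basis (Fin n) R A)
    (hb : ∀ i : Fin n, b i = α ^ (i : ℕ))
    (D : A →ₗ[R] A)
    (hD : ∀ x y : A, D (x * y) = D x * τ y + σ x * D y) :
    (∃ γ : A, ∀ x : A, D x = γ * (τ x - σ x)) ↔
      (∃ β : A, D α = β * (τ α - σ α)) := by
  constructor
  · rintro ⟨γ, hγ⟩
    exact ⟨γ, hγ α⟩
  · rintro ⟨β, hβ⟩
    refine ⟨β, ?_⟩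
    have hD1 : D 1 = 0 := by
      have := hD 1 1
      simp only [mul_one, map_one, one_mul] at this
      linear_combination -this
    have hpow : ∀ k : ℕ, D (α ^ k) = β * (τ (α ^ k) - σ (α ^ k)) := by
      intro k
      induction k with
      | zero => simp [hD1]
      | succ m ih =>
        have : D (α ^ (m + 1)) = D (α ^ m * α) := by ring_nf
        rw [this, hD, ih, hβ]
        simp only [pow_succ, map_mul]
        ring
    -- define the inner derivation as a linear map and use the basis
    let E : A →ₗ[R] A :=
      { toFun := fun x => β * (τ x - σ x)
        map_add' := fun x y => by simp [map_add]; ring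
        map_smul' := fun r x => by
          simp only [map_smul, ← smul_sub, mul_smul_comm, RingHom.id_apply] }
    have hDE : D = E := by
      apply b.ext
      intro i
      rw [hb i]
      simpa [E] using hpow (i : ℕ)
    intro x
    rw [hDE]
    rfl
end

section
/- Let A ⊆ B be commutative rings with unity such that B = A[θ] is an integral domain and a free A-module with basis {1, θ, ..., θ^{n-1}}, where θ satisfies the monic polynomial f(x) = ∑_{i=0}^{n} aᵢxⁱ (aₙ = 1, aᵢ ∈ A) of minimal degree. Let E be the minimal splitting field of θ over the quotient field K of B, and σ, τ : B → E two distinct A-algebra homomorphisms with σ(θ) ≠ τ(θ). If D : B → E is an A-linear map with D(1) = 0 satisfying D(θⁱ) = (∑_{s+t=i-1} σ(θ)^s τ(θ)^t)·D(θ) for all i ∈ {1, ..., n-1}, then D is a (σ,τ)-derivation, i.e., D(xy) = D(x)τ(y) + σ(x)D(y) for all x, y ∈ B. -/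
/-- Theorem 3.2: Let B = A[θ] be an integral domain, free as an
A-module with power basis {1, θ, ..., θ^{n-1}}, where θ satisfies the monic
polynomial f(x) = ∑ aᵢxⁱ (aₙ = 1) of minimal degree; E the minimal splitting
field of θ over the quotient field K of B, σ, τ : B → E distinct A-algebra
homomorphisms with σ(θ) ≠ τ(θ). Any A-linear D : B → E with D(1) = 0 and
D(θⁱ) = (∑_{s+t=i-1} σ(θ)^s τ(θ)^t)·D(θ) for i ∈ {1,...,n-1} is a
(σ,τ)-derivation. -/
theorem sigma_tau_derivation_of_power_conditions
    {A B E : Type*} [CommRing A] [CommRing B] [IsDomain B] [Field E]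
    [Algebra A B] [Algebra A E]
    (θ : B) (n : ℕ) (b : Module.Basis (Fin n) A B) (hb : ∀ i : Fin n, b i = θ ^ (i : ℕ))
    (a : ℕ → A) (han : a n = 1)
    (hroot : ∑ i ∈ Finset.range (n + 1), algebraMap A B (a i) * θ ^ i = 0)
    (hmin : ∀ g : Polynomial A, g.Monic → Polynomial.aeval θ g = 0 →
      n ≤ g.natDegree)
    (σ τ : B →ₐ[A] E) (hστ : σ ≠ τ) (hθ : σ θ ≠ τ θ)
    (D : B →ₗ[A] E) (hD1 : D 1 = 0)
    (hDpow : ∀ i ∈ Finset.Icc 1 (n - 1),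
      D (θ ^ i) = (∑ s ∈ Finset.range i, σ θ ^ s * τ θ ^ (i - 1 - s)) * D θ) :
    ∀ x y : B, D (x * y) = D x * τ y + σ x * D y := by
  have hc : σ θ - τ θ ≠ 0 := sub_ne_zero.mpr hθ
  set c : E := (σ θ - τ θ)⁻¹ * D θ with hcdef
  let D' : B →ₗ[A] E :=
    { toFun := fun z => (σ z - τ z) * c
      map_add' := by
        intro x y
        simp [map_add]
        ring
      map_smul' := by
        intro m x
        simp [Algebra.smul_def]
        ring }
  have hD' : ∀ z : B, D' z = (σ z - τ z) * c := fun z => rfl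
  have key : D = D' := by
    apply b.ext
    intro i
    rw [hb i, hD']
    rcases Nat.eq_zero_or_pos (i : ℕ) with h0 | hpos
    · rw [h0]
      simpa using hD1
    · have hin : (i : ℕ) ∈ Finset.Icc 1 (n - 1) := by
        refine Finset.mem_Icc.mpr ⟨hpos, ?_⟩
        omega
      rw [hDpow _ hin, map_pow, map_pow]
      have := geom_sum₂_mul (σ θ) (τ θ) (i : ℕ)
      rw [hcdef, ← this]
      field_simp
  intro x y
  rw [key]
  simp only [hD', map_mul]
  ring
end

section
/- Let ζ be a primitive n-th root of unity (n ≥ 3), O_K = ℤ[ζ], and σ, τ : O_K → O_K two distinct ℤ-algebra endomorphisms, so σ(ζ) = ζ^u and τ(ζ) = ζ^v for some u, v coprime to n with ζ^u ≠ ζ^v. Then every ℤ-linear map D : O_K → O_K with D(1) = 0 satisfying D(ζⁱ) = (∑_{s+t=i-1} ζ^{us} ζ^{vt})·D(ζ) for all i ∈ {1, ..., φ(n)-1} is a (σ,τ)-derivation, and the ℤ-module of all (σ,τ)-derivations of O_K is free of rank φ(n). -/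
open Polynomial in
lemma aux_basis (n : ℕ) (hn : 3 ≤ n) (ζ : ℂ) (hζ : IsPrimitiveRoot ζ n)
    (O : Subalgebra ℤ ℂ) (hO : O = Algebra.adjoin ℤ ({ζ} : Set ℂ))
    (ζO : O) (hζO : (ζO : ℂ) = ζ) :
    ∃ b : Module.Basis (Fin n.totient) ℤ O, ∀ j : Fin n.totient, b j = ζO ^ (j : ℕ) := by
  have hnpos : 0 < n := by omega
  -- linear independence over ℚ in ℂ
  have hdeg : (minpoly ℚ ζ).natDegree = n.totient := by
    rw [← cyclotomic_eq_minpoly_rat hζ hnpos, natDegree_cyclotomic]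
  have hliQ : LinearIndependent ℚ (fun j : Fin n.totient => ζ ^ (j : ℕ)) := by
    have h := linearIndependent_pow (K := ℚ) (S := ℂ) ζ
    exact hdeg ▸ h
  have hliZ : LinearIndependent ℤ (fun j : Fin n.totient => ζ ^ (j : ℕ)) := by
    refine hliQ.restrict_scalars ?_
    intro a b h
    simpa [zsmul_eq_mul] using h
  have hli : LinearIndependent ℤ (fun j : Fin n.totient => ζO ^ (j : ℕ)) := by
    refine LinearIndependent.of_comp (Subalgebra.val O).toLinearMap ?_
    convert hliZ using 1
    funext j
    simp [hζO]
    all_goals rfl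
  -- spanning
  have hspan : ⊤ ≤ Submodule.span ℤ (Set.range (fun j : Fin n.totient => ζO ^ (j : ℕ))) := by
    intro x _
    have hx : (x : ℂ) ∈ Algebra.adjoin ℤ ({ζ} : Set ℂ) := by rw [← hO]; exact x.2
    rw [Algebra.adjoin_singleton_eq_range_aeval] at hx
    obtain ⟨p, hp⟩ := hx
    have hroot : aeval ζ (cyclotomic n ℤ) = 0 := by
      have := hζ.isRoot_cyclotomic hnpos
      simpa [aeval_def, eval₂_eq_eval_map, map_cyclotomic, IsRoot.def] using this
    set r := p %ₘ cyclotomic n ℤ with hr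
    have hmon := cyclotomic.monic n ℤ
    have hval : aeval ζ r = aeval ζ p := by
      conv_rhs => rw [← modByMonic_add_div p (cyclotomic n ℤ)]
      simp [hroot, hr]
    have hdegr : r.natDegree < n.totient := by
      have h1 : r.degree < (cyclotomic n ℤ).degree := degree_modByMonic_lt p hmon
      have h2 : (cyclotomic n ℤ).degree = (n.totient : ℕ) := by
        rw [degree_eq_natDegree (cyclotomic_ne_zero n ℤ), natDegree_cyclotomic]
      by_cases hr0 : r = 0
      · simpa [hr0] using Nat.totient_pos.2 hnpos
      · rw [degree_eq_natDegree hr0, h2] at h1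
        exact_mod_cast h1
    have hxeq : x = ∑ j : Fin n.totient, r.coeff (j : ℕ) • ζO ^ (j : ℕ) := by
      apply Subtype.coe_injective
      push_cast
      rw [hζO, Fin.sum_univ_eq_sum_range (fun j => r.coeff j • ζ ^ j),
        ← aeval_eq_sum_range' hdegr, hval]
      exact hp.symm
    rw [hxeq]
    exact Submodule.sum_mem _ fun j _ =>
      Submodule.smul_mem _ _ (Submodule.subset_span (Set.mem_range_self j))
  refine ⟨Module.Basis.mk hli hspan, fun j => Module.Basis.mk_apply _ _ _⟩


/-- The submodule of (σ,τ)-derivations A → E inside the R-module of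
R-linear maps A → E. -/
def derivationsSubmodule (R : Type*) {A E : Type*} [CommRing R] [CommRing A]
    [CommRing E] [Algebra R A] [Algebra R E] (σ τ : A →ₐ[R] E) :
    Submodule R (A →ₗ[R] E) where
  carrier := {D | ∀ x y : A, D (x * y) = D x * τ y + σ x * D y}
  add_mem' := by
    intro D D' hD hD' x y
    simp only [LinearMap.add_apply, hD x y, hD' x y]
    ring
  zero_mem' := by intro x y; simp
  smul_mem' := by
    intro c D hD x y
    simp only [LinearMap.smul_apply, hD x y, smul_add, smul_mul_assoc,
      mul_smul_comm]

set_option maxHeartbeats 1000000 in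
set_option synthInstance.maxHeartbeats 400000 in
/-- For O_K = ℤ[ζ] (ζ a primitive n-th root of unity, n ≥ 3)
and distinct ℤ-algebra endomorphisms σ, τ with σ(ζ) = ζ^u, τ(ζ) = ζ^v
(u, v coprime to n, ζ^u ≠ ζ^v), every ℤ-linear D with D(1) = 0 satisfying the
power conditions is a (σ,τ)-derivation, and the ℤ-module of all
(σ,τ)-derivations of O_K is free of rank φ(n). -/
theorem derivations_of_cyclotomic_integers
    (n : ℕ) (hn : 3 ≤ n) (ζ : ℂ) (hζ : IsPrimitiveRoot ζ n)
    (O : Subalgebra ℤ ℂ) (hO : O = Algebra.adjoin ℤ ({ζ} : Set ℂ))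
    (ζO : O) (hζO : (ζO : ℂ) = ζ)
    (σ τ : O →ₐ[ℤ] O) (hστ : σ ≠ τ)
    (u v : ℕ) (hu : Nat.Coprime u n) (hv : Nat.Coprime v n)
    (hσ : σ ζO = ζO ^ u) (hτ : τ ζO = ζO ^ v) (huv : ζO ^ u ≠ ζO ^ v) :
    (∀ D : O →ₗ[ℤ] O, D 1 = 0 →
      (∀ i ∈ Finset.Icc 1 (Nat.totient n - 1),
        D (ζO ^ i) =
          (∑ s ∈ Finset.range i, (ζO ^ u) ^ s * (ζO ^ v) ^ (i - 1 - s)) * D ζO) →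
      ∀ x y : O, D (x * y) = D x * τ y + σ x * D y) ∧
    Module.Free ℤ (derivationsSubmodule ℤ σ τ) ∧
    Module.finrank ℤ (derivationsSubmodule ℤ σ τ) = Nat.totient n := by
  have htot : 2 ≤ n.totient := by
    by_contra h
    push_neg at h
    have h1 : 0 < n.totient := Nat.totient_pos.2 (by omega)
    have h2 : n.totient = 1 := by omega
    rcases Nat.totient_eq_one_iff.mp h2 with rfl | rfl <;> omega
  obtain ⟨b, hb⟩ := aux_basis n hn ζ hζ O hO ζO hζO
  have hA : ζO ^ u - ζO ^ v ≠ 0 := sub_ne_zero.mpr huv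
  set A : O := ζO ^ u - ζO ^ v with hAdef
  have part1 : ∀ D : O →ₗ[ℤ] O, D 1 = 0 →
      (∀ i ∈ Finset.Icc 1 (Nat.totient n - 1),
        D (ζO ^ i) =
          (∑ s ∈ Finset.range i, (ζO ^ u) ^ s * (ζO ^ v) ^ (i - 1 - s)) * D ζO) →
      ∀ x y : O, D (x * y) = D x * τ y + σ x * D y := by
   intro D hD1 hDi
   -- key identity
   have key : ∀ x : O, A * D x = (σ x - τ x) * D ζO := by
     have heq : (LinearMap.mulLeft ℤ A).comp D =
         (LinearMap.mulLeft ℤ (D ζO)).comp (σ.toLinearMap - τ.toLinearMap) := by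
       apply b.ext
       intro j
       rw [hb j]
       simp only [LinearMap.comp_apply, LinearMap.mulLeft_apply, LinearMap.sub_apply,
         AlgHom.toLinearMap_apply]
       rcases Nat.eq_zero_or_pos (j : ℕ) with hj | hj
       · rw [hj]; simp [hD1]
       · have hji : (j : ℕ) ∈ Finset.Icc 1 (n.totient - 1) := by
           simp only [Finset.mem_Icc]
           exact ⟨hj, by have := j.2; omega⟩
         rw [hDi _ hji, map_pow, map_pow, hσ, hτ]
         have hg := geom_sum₂_mul (ζO ^ u) (ζO ^ v) (j : ℕ)
         calc A * ((∑ s ∈ Finset.range (j:ℕ), (ζO ^ u) ^ s * (ζO ^ v) ^ ((j:ℕ) - 1 - s)) * D ζO)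
             = ((∑ s ∈ Finset.range (j:ℕ), (ζO ^ u) ^ s * (ζO ^ v) ^ ((j:ℕ) - 1 - s)) * A) * D ζO := by ring
           _ = D ζO * ((ζO ^ u) ^ (j:ℕ) - (ζO ^ v) ^ (j:ℕ)) := by rw [hg]; ring
     intro x
     have := congrFun (congrArg DFunLike.coe heq) x
     simpa [mul_comm] using this
   intro x y
   have h1 := key x
   have h2 := key y
   have h3 := key (x * y)
   rw [map_mul σ, map_mul τ] at h3
   apply mul_left_cancel₀ hA
   linear_combination h3 - τ y * h1 - σ x * h2
  -- Part 2: the module of derivations is isomorphic to O via evaluation at ζO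
  have hfree : Module.Free ℤ O := Module.Free.of_basis b
  let ev : (derivationsSubmodule ℤ σ τ) →ₗ[ℤ] O :=
    { toFun := fun D => D.1 ζO
      map_add' := fun D E => rfl
      map_smul' := fun c D => rfl }
  have hpow : ∀ D : (derivationsSubmodule ℤ σ τ), D.1 ζO = 0 →
      ∀ i : ℕ, D.1 (ζO ^ i) = 0 := by
    intro D h0 i
    have hleib : ∀ x y : O, D.1 (x * y) = D.1 x * τ y + σ x * D.1 y := D.2
    induction i with
    | zero =>
      rw [pow_zero]
      have h := hleib 1 1
      rw [mul_one, map_one σ, map_one τ, mul_one, one_mul] at h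
      have h' : D.1 1 + D.1 1 = D.1 1 + 0 := by rw [← h, add_zero]
      exact add_left_cancel h'
    | succ k ih =>
      rw [pow_succ, hleib (ζO ^ k) ζO, ih, h0, zero_mul, mul_zero, add_zero]
  have hinj : Function.Injective ev := by
    refine (@LinearMap.ker_eq_bot ℤ ℤ (derivationsSubmodule ℤ σ τ) O _ _ _ _ _ _ (RingHom.id ℤ) ev).mp ?_
    refine (Submodule.eq_bot_iff _).2 fun D hD => ?_
    apply Subtype.ext
    apply b.ext
    intro j
    rw [hb j]
    have hz : D.1 ζO = 0 := LinearMap.mem_ker.mp hD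
    rw [hpow D hz (j : ℕ)]
    simp
  have hsurj : Function.Surjective ev := by
    intro d
    set C : ℕ → O :=
      fun i => ∑ s ∈ Finset.range i, (ζO ^ u) ^ s * (ζO ^ v) ^ (i - 1 - s) with hC
    set D0 : O →ₗ[ℤ] O := b.constr ℤ (fun j => C (j : ℕ) * d) with hD0
    have hD0pow : ∀ i : ℕ, i < n.totient → D0 (ζO ^ i) = C i * d := by
      intro i hi
      have hbi : ζO ^ i = b ⟨i, hi⟩ := (hb ⟨i, hi⟩).symm
      rw [hbi, hD0]
      exact Module.Basis.constr_basis b ℤ (fun j => C (j : ℕ) * d) ⟨i, hi⟩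
    have hD01 : D0 1 = 0 := by
      have h := hD0pow 0 (by omega)
      simpa [hC] using h
    have hD0z : D0 ζO = d := by
      have h := hD0pow 1 (by omega)
      rw [pow_one] at h
      rw [h]
      simp [hC]
    have hmem : D0 ∈ derivationsSubmodule ℤ σ τ :=
      part1 D0 hD01 (fun i hi => by
        rw [Finset.mem_Icc] at hi
        rw [hD0z]
        have h := hD0pow i (by omega)
        simpa only [hC] using h)
    exact ⟨⟨D0, hmem⟩, hD0z⟩
  let e : (derivationsSubmodule ℤ σ τ) ≃ₗ[ℤ] O := LinearEquiv.ofBijective ev ⟨hinj, hsurj⟩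
  refine ⟨part1, Module.Free.of_equiv e.symm, ?_⟩
  rw [e.finrank_eq, Module.finrank_eq_card_basis b, Fintype.card_fin]
end

section
/- Let A = ℤ[X]/⟨X⁶ - 1⟩ with α the class of X, and let σ, τ be the ℤ-algebra endomorphisms determined by σ(α) = α and τ(α) = α². Define a ℤ-linear map D : A → A by D(1) = 0, D(α) = α, and D(α^k) = (∑_{s+t=k-1} σ(α)^s τ(α)^t)·D(α) for k ∈ {1,...,5}. Then D is not a (σ,τ)-derivation. -/
/-!
Iterating the twisted Leibniz rule gives `D (a ^ n) = (∑ i < n, σ a ^ i * τ a ^ (n - 1 - i)) * D a`.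
For `a = α` and `n = 6` the left side is `D 1 = 0`, whereas the augmentation `α ↦ 1` sends the
right side to `6 ≠ 0`.
-/

open Polynomial

/-- The class of X in ℤ[X]/⟨X⁶ - 1⟩. -/
noncomputable def alphaGen : ℤ[X] ⧸ Ideal.span ({X ^ 6 - 1} : Set ℤ[X]) :=
  Ideal.Quotient.mk (Ideal.span ({X ^ 6 - 1} : Set ℤ[X])) X

open Finset

section TwistedDerivation

variable {A B F : Type*} [Monoid A] [CommRing B] [FunLike F A B] [MonoidHomClass F A B]
  {σ τ : F} {D : A → B}

theorem map_one_eq_zero_of_twisted_derivation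
    (hD : ∀ x y, D (x * y) = D x * τ y + σ x * D y) : D 1 = 0 := by
  simpa using hD 1 1

theorem map_pow_eq_geom_sum₂_mul_of_twisted_derivation
    (hD : ∀ x y, D (x * y) = D x * τ y + σ x * D y) (a : A) (n : ℕ) :
    D (a ^ n) = (∑ i ∈ range n, σ a ^ i * τ a ^ (n - 1 - i)) * D a := by
  induction n with
  | zero => simp [map_one_eq_zero_of_twisted_derivation hD]
  | succ n ih =>
    rw [pow_succ, hD, ih, map_pow, add_tsub_cancel_right, geom_sum₂_succ_eq]
    ring

end TwistedDerivation

section CyclicQuotient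

variable {R : Type*} [CommRing R] (n : ℕ)

theorem Polynomial.quotient_mk_X_pow_eq_one :
    Ideal.Quotient.mk (Ideal.span {(X : R[X]) ^ n - 1}) (X : R[X]) ^ n = 1 := by
  rw [← map_pow, ← map_one (Ideal.Quotient.mk _), Ideal.Quotient.eq]
  exact Ideal.mem_span_singleton_self _

noncomputable def Polynomial.quotientEvalOne : R[X] ⧸ Ideal.span {(X : R[X]) ^ n - 1} →ₐ[R] R :=
  Ideal.Quotient.liftₐ _ (aeval 1) fun p hp => by
    obtain ⟨q, rfl⟩ := Ideal.mem_span_singleton'.mp hp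
    simp

@[simp]
theorem Polynomial.quotientEvalOne_mk_X :
    quotientEvalOne n (Ideal.Quotient.mk (Ideal.span {(X : R[X]) ^ n - 1}) (X : R[X])) = 1 := by
  simp [quotientEvalOne]

end CyclicQuotient

theorem not_sigma_tau_derivation_example_general
    (σ τ : (ℤ[X] ⧸ Ideal.span ({X ^ 6 - 1} : Set ℤ[X])) →ₐ[ℤ]
           (ℤ[X] ⧸ Ideal.span ({X ^ 6 - 1} : Set ℤ[X])))
    (hσ : σ alphaGen = alphaGen) (hτ : τ alphaGen = alphaGen ^ 2)
    (D : (ℤ[X] ⧸ Ideal.span ({X ^ 6 - 1} : Set ℤ[X])) →ₗ[ℤ]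
         (ℤ[X] ⧸ Ideal.span ({X ^ 6 - 1} : Set ℤ[X])))
    (hDα : D alphaGen = alphaGen) :
    ¬ (∀ x y, D (x * y) = D x * τ y + σ x * D y) := by
  intro hD
  have h := map_pow_eq_geom_sum₂_mul_of_twisted_derivation hD alphaGen 6
  have hα6 : alphaGen ^ 6 = 1 := quotient_mk_X_pow_eq_one 6
  have hεα : quotientEvalOne 6 alphaGen = 1 := quotientEvalOne_mk_X 6
  rw [hα6, map_one_eq_zero_of_twisted_derivation hD, hσ, hτ, hDα] at h
  have hε : quotientEvalOne 6
      ((∑ i ∈ range 6, alphaGen ^ i * (alphaGen ^ 2) ^ (6 - 1 - i)) * alphaGen) = 6 := by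
    simp [hεα, sum_range_succ]
  rw [← h, map_zero] at hε
  exact absurd hε (by norm_num)

/-- In A = ℤ[X]/⟨X⁶ - 1⟩, with σ(α) = α, τ(α) = α², the
ℤ-linear map D with D(1) = 0, D(α) = α and
D(α^k) = (∑_{s+t=k-1} σ(α)^s τ(α)^t)·D(α) for k ∈ {1,...,5}
is not a (σ,τ)-derivation. -/
theorem not_sigma_tau_derivation_example
    (σ τ : (ℤ[X] ⧸ Ideal.span ({X ^ 6 - 1} : Set ℤ[X])) →ₐ[ℤ]
           (ℤ[X] ⧸ Ideal.span ({X ^ 6 - 1} : Set ℤ[X])))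
    (hσ : σ alphaGen = alphaGen) (hτ : τ alphaGen = alphaGen ^ 2)
    (D : (ℤ[X] ⧸ Ideal.span ({X ^ 6 - 1} : Set ℤ[X])) →ₗ[ℤ]
         (ℤ[X] ⧸ Ideal.span ({X ^ 6 - 1} : Set ℤ[X])))
    (hD1 : D 1 = 0) (hDα : D alphaGen = alphaGen)
    (hDk : ∀ k ∈ Finset.Icc 1 5,
      D (alphaGen ^ k) =
        (∑ s ∈ Finset.range k, (σ alphaGen) ^ s * (τ alphaGen) ^ (k - 1 - s)) *
          D alphaGen) :
    ¬ (∀ x y, D (x * y) = D x * τ y + σ x * D y) :=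
  not_sigma_tau_derivation_example_general σ τ hσ hτ D hDα
end
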